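/- arXiv:1805.10497 — 2 statements merged into one kernel-verified Lean document; each statement's English description precedes it below -/
import Mathlib

section
/- Let 0 < r₁ < R₁ and 0 < r₂ < R₂ be real numbers with R₁/r₁ = R₂/r₂, and let f : ℂ → ℂ be holomorphic on A₁ = {z ∈ ℂ : r₁ < |z| < R₁} and map A₁ bijectively onto A₂ = {z ∈ ℂ : r₂ < |z| < R₂}. Then there exists λ ∈ ℂ such that either f(z) = λ·z for all z ∈ A₁, in which case |λ| = r₂/r₁, or f(z) = λ/z for all z ∈ A₁, in which case |λ| = r₂·R₁. -/
/-- The open annulus `{z ∈ ℂ : r < |z| < R}`. -/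
def annulus (r R : ℝ) : Set ℂ := {z : ℂ | r < ‖z‖ ∧ ‖z‖ < R}

/-!
A bijective holomorphic map between annuli is proper, so `‖f z‖` tends to `r₂` or `R₂` as `‖z‖`
tends to `r₁` or to `R₁`; since thin strips along each boundary circle are connected, each boundary
circle of `A(r₁,R₁)` is sent to a single boundary circle of `A(r₂,R₂)`. The maximum principle,
applied to a nonvanishing `h` and to `1 / h`, shows that if `‖h‖` has the same limit `c` along both
boundary circles then `‖h‖ = c` throughout, so `h` is constant. For `h = f` this rules out both
circles going to the same circle. If the inner circle goes to the inner circle, take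
`h z = f z / z`, whose modulus tends to `r₂ / r₁ = R₂ / R₁` on both sides; otherwise take
`h z = z * f z`, whose modulus tends to `r₁ R₂ = r₂ R₁`.
-/

open Set Filter Topology

theorem Filter.Tendsto.nhds_of_nhds_sup {X Y : Type*} [TopologicalSpace Y] {l : Filter X}
    {g : X → Y} {a b : Y} {U : Set Y} (h : Tendsto g l (𝓝 a ⊔ 𝓝 b))
    (hU : ∀ᶠ x in l, g x ∈ U) (hbU : Uᶜ ∈ 𝓝 b) : Tendsto g l (𝓝 a) := by
  refine (tendsto_inf.2 ⟨h, tendsto_principal.2 hU⟩).mono_right ?_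
  rw [inf_sup_right, inf_principal_eq_bot.2 hbU, sup_bot_eq]
  exact inf_le_left

theorem Filter.HasBasis.tendsto_nhds_or_tendsto_nhds {X Y ι : Type*} [TopologicalSpace X]
    [TopologicalSpace Y] [T2Space Y] {l : Filter X} {p : ι → Prop} {s : ι → Set X}
    (hl : l.HasBasis p s) (hs : ∀ i, p i → IsPreconnected (s i)) {S : Set X} (hS : S ∈ l)
    {g : X → Y} (hg : ContinuousOn g S) {a b : Y} (h : Tendsto g l (𝓝 a ⊔ 𝓝 b)) :
    Tendsto g l (𝓝 a) ∨ Tendsto g l (𝓝 b) := by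
  rcases eq_or_ne a b with rfl | hab
  · exact Or.inl (by simpa using h)
  obtain ⟨U, V, hU, hV, haU, hbV, hUV⟩ := t2_separation hab
  have hUV_mem : U ∪ V ∈ 𝓝 a ⊔ 𝓝 b :=
    mem_sup.2 ⟨mem_of_superset (hU.mem_nhds haU) subset_union_left,
      mem_of_superset (hV.mem_nhds hbV) subset_union_right⟩
  obtain ⟨i, hi, hsi⟩ := hl.mem_iff.1 (inter_mem hS (h hUV_mem))
  have hgs : g '' s i ⊆ U ∪ V := image_subset_iff.2 fun x hx => (hsi hx).2
  rcases ((hs i hi).image g (hg.mono fun x hx => (hsi hx).1)).subset_or_subset hU hV hUV hgs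
    with hsub | hsub
  · exact Or.inl (h.nhds_of_nhds_sup (hl.eventually_iff.2 ⟨i, hi, fun x hx => hsub ⟨x, hx, rfl⟩⟩)
      (mem_of_superset (hV.mem_nhds hbV) hUV.subset_compl_left))
  · exact Or.inr ((sup_comm (𝓝 a) (𝓝 b) ▸ h).nhds_of_nhds_sup
      (hl.eventually_iff.2 ⟨i, hi, fun x hx => hsub ⟨x, hx, rfl⟩⟩)
      (mem_of_superset (hU.mem_nhds haU) hUV.subset_compl_right))

theorem IsCompact.compl_mem_comap_nhds {X Y : Type*} [TopologicalSpace X] [TopologicalSpace Y]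
    [T2Space Y] {K : Set X} (hK : IsCompact K) {φ : X → Y} (hφ : Continuous φ) {a : Y}
    (ha : ∀ x ∈ K, φ x ≠ a) : Kᶜ ∈ comap φ (𝓝 a) :=
  ⟨(φ '' K)ᶜ, (hK.image hφ).isClosed.isOpen_compl.mem_nhds fun ⟨x, hx, hxa⟩ => ha x hx hxa,
    fun x hx hxK => hx ⟨x, hxK, rfl⟩⟩

theorem Set.BijOn.isCompact_inter_preimage {X Y : Type*} [TopologicalSpace X]
    [TopologicalSpace Y] {f : X → Y} {U : Set X} {V : Set Y} (hbij : BijOn f U V)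
    (hf : IsOpenMap (U.domRestrict f)) {K : Set Y} (hK : IsCompact K) (hKV : K ⊆ V) :
    IsCompact (U ∩ f ⁻¹' K) := by
  rcases U.eq_empty_or_nonempty with rfl | ⟨x, -⟩
  · simp
  have : Nonempty X := ⟨x⟩
  have hinv := hbij.invOn_invFunOn
  have hcont : ContinuousOn (Function.invFunOn f U) V :=
    hbij.image_eq ▸ hf.continuousOn_image_of_leftInvOn hinv.1
  have himage : Function.invFunOn f U '' K = U ∩ f ⁻¹' K := by
    have h := hinv.2.image_inter' (s₁ := K)
    rwa [inter_eq_self_of_subset_left hKV, inter_comm,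
      (hinv.symm.bijOn hbij.surjOn.mapsTo_invFunOn hbij.mapsTo).image_eq] at h
  exact himage ▸ hK.image_of_continuousOn (hcont.mono hKV)

theorem isCompact_norm_preimage {E : Type*} [NormedAddCommGroup E] [ProperSpace E]
    {K : Set ℝ} (hK : IsCompact K) : IsCompact ((‖·‖) ⁻¹' K : Set E) := by
  obtain ⟨C, hC⟩ := hK.bddAbove
  exact Metric.isCompact_of_isClosed_isBounded (hK.isClosed.preimage continuous_norm)
    (isBounded_iff_forall_norm_le.2 ⟨C, fun z hz => hC hz⟩)

theorem DifferentiableOn.isOpenMap_domRestrict {U : Set ℂ} {f : ℂ → ℂ}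
    (hf : DifferentiableOn ℂ f U) (hU : IsOpen U) (hUc : IsPreconnected U) (hUn : U.Nontrivial)
    (hinj : InjOn f U) : IsOpenMap (U.domRestrict f) := by
  rcases (hf.analyticOnNhd hU).is_constant_or_isOpen hUc with ⟨w, hw⟩ | hopen
  · obtain ⟨x, hx, y, hy, hxy⟩ := hUn
    exact absurd (hinj hx hy ((hw x hx).trans (hw y hy).symm)) hxy
  · intro t ht
    rw [domRestrict_eq, image_comp]
    exact hopen _ (Subtype.coe_image_subset _ _) (hU.isOpenMap_subtype_val t ht)

theorem DifferentiableOn.norm_le_of_tendsto_norm {E F : Type*} [NormedAddCommGroup E]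
    [NormedSpace ℂ E] [NormedAddCommGroup F] [NormedSpace ℂ F] [StrictConvexSpace ℝ F]
    {U : Set E} {g : E → F} (hg : DifferentiableOn ℂ g U) (hU : IsOpen U)
    (hUc : IsPreconnected U) {l : Filter E} [l.NeBot] (hUl : U ∈ l)
    (hl : ∀ s ∈ l, ∃ K ⊆ U, IsCompact K ∧ U \ s ⊆ K) {C : ℝ}
    (hC : Tendsto (‖g ·‖) l (𝓝 C)) : ∀ z ∈ U, ‖g z‖ ≤ C := by
  intro z₀ hz₀
  by_contra! hlt
  obtain ⟨C', hCC', hC'⟩ := exists_between hlt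
  have hs : {z | ‖g z‖ < C'} ∈ l := hC (Iio_mem_nhds hCC')
  obtain ⟨K, hKU, hK, hUK⟩ := hl _ hs
  have hz₀K : z₀ ∈ K := hUK ⟨hz₀, fun h : ‖g z₀‖ < C' => by linarith⟩
  obtain ⟨p, hpK, hp⟩ := hK.exists_isMaxOn ⟨z₀, hz₀K⟩ (hg.continuousOn.mono hKU).norm
  have hgp : ‖g z₀‖ ≤ ‖g p‖ := hp hz₀K
  have hmax : IsMaxOn (‖g ·‖) U p := fun z hz => by
    by_cases hzs : ‖g z‖ < C'
    · exact (hzs.trans hC').le.trans hgp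
    · exact hp (hUK ⟨hz, hzs⟩)
  obtain ⟨z, hzU, hzs⟩ := Filter.nonempty_of_mem (inter_mem hUl hs)
  have hgz : g z = g p :=
    Complex.eqOn_of_isPreconnected_of_isMaxOn_norm hUc hU hg (hKU hpK) hmax hzU
  have : ‖g p‖ < C' := hgz ▸ hzs
  linarith

section Annulus

variable {r R : ℝ}

theorem isOpen_annulus (r R : ℝ) : IsOpen (annulus r R) :=
  isOpen_Ioo.preimage continuous_norm

theorem annulus_nonempty (hr : 0 ≤ r) (hrR : r < R) : (annulus r R).Nonempty :=
  ⟨((r + R) / 2 : ℝ), show _ ∧ _ by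
    rw [Complex.norm_real, Real.norm_of_nonneg (by linarith)]; constructor <;> linarith⟩

theorem annulus_nontrivial (hr : 0 ≤ r) (hrR : r < R) : (annulus r R).Nontrivial :=
  let ⟨_, hw⟩ := annulus_nonempty hr hrR
  (infinite_of_mem_nhds _ ((isOpen_annulus r R).mem_nhds hw)).nontrivial

theorem isPreconnected_annulus (r R : ℝ) : IsPreconnected (annulus r R) := by
  have hpolar : annulus r R = (fun p : ℝ × ℝ => (p.1 : ℂ) * Complex.exp (p.2 * Complex.I)) ''
      ((Ioo r R ∩ Ici 0) ×ˢ univ) := by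
    ext z
    constructor
    · exact fun hz =>
        ⟨(‖z‖, z.arg), ⟨⟨hz, norm_nonneg z⟩, trivial⟩, Complex.norm_mul_exp_arg_mul_I z⟩
    · rintro ⟨⟨s, θ⟩, ⟨⟨hs, hs0 : 0 ≤ s⟩, -⟩, rfl⟩
      simpa [annulus, Complex.norm_exp_ofReal_mul_I, abs_of_nonneg hs0] using hs
  rw [hpolar]
  exact ((inferInstance : (Ioo r R ∩ Ici 0).OrdConnected).isPreconnected.prod
    isPreconnected_univ).image _ (by fun_prop)

noncomputable def innerEdge (r : ℝ) : Filter ℂ := comap (‖·‖) (𝓝[>] r)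

noncomputable def outerEdge (R : ℝ) : Filter ℂ := comap (‖·‖) (𝓝[<] R)

theorem hasBasis_innerEdge (r : ℝ) : (innerEdge r).HasBasis (r < ·) (annulus r) :=
  (nhdsGT_basis r).comap _

theorem hasBasis_outerEdge (R : ℝ) : (outerEdge R).HasBasis (· < R) (annulus · R) :=
  (nhdsLT_basis R).comap _

theorem tendsto_norm_innerEdge (r : ℝ) : Tendsto (‖·‖) (innerEdge r) (𝓝 r) :=
  tendsto_comap.mono_right nhdsWithin_le_nhds

theorem tendsto_norm_outerEdge (R : ℝ) : Tendsto (‖·‖) (outerEdge R) (𝓝 R) :=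
  tendsto_comap.mono_right nhdsWithin_le_nhds

theorem innerEdge_neBot (hr : 0 ≤ r) : (innerEdge r).NeBot :=
  (hasBasis_innerEdge r).neBot_iff.2 fun hc => annulus_nonempty hr hc

theorem annulus_mem_innerEdge (hrR : r < R) : annulus r R ∈ innerEdge r :=
  (hasBasis_innerEdge r).mem_of_mem hrR

theorem annulus_mem_outerEdge (hrR : r < R) : annulus r R ∈ outerEdge R :=
  (hasBasis_outerEdge R).mem_of_mem hrR

theorem annulus_mem_edges (hrR : r < R) : annulus r R ∈ innerEdge r ⊔ outerEdge R :=
  mem_sup.2 ⟨annulus_mem_innerEdge hrR, annulus_mem_outerEdge hrR⟩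

theorem IsCompact.compl_mem_edges {K : Set ℂ} (hK : IsCompact K) (hKA : K ⊆ annulus r R) :
    Kᶜ ∈ innerEdge r ⊔ outerEdge R :=
  mem_sup.2 ⟨comap_mono nhdsWithin_le_nhds <|
      hK.compl_mem_comap_nhds continuous_norm fun _ hz => (hKA hz).1.ne',
    comap_mono nhdsWithin_le_nhds <|
      hK.compl_mem_comap_nhds continuous_norm fun _ hz => (hKA hz).2.ne⟩

theorem exists_isCompact_diff_subset_of_mem_edges {s : Set ℂ}
    (hs : s ∈ innerEdge r ⊔ outerEdge R) :
    ∃ K ⊆ annulus r R, IsCompact K ∧ annulus r R \ s ⊆ K := by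
  obtain ⟨c, hc, hcs⟩ := (hasBasis_innerEdge r).mem_iff.1 (mem_sup.1 hs).1
  obtain ⟨c', hc', hc's⟩ := (hasBasis_outerEdge R).mem_iff.1 (mem_sup.1 hs).2
  refine ⟨(‖·‖) ⁻¹' Icc c c', fun z hz => ⟨hc.trans_le hz.1, hz.2.trans_lt hc'⟩,
    isCompact_norm_preimage isCompact_Icc, ?_⟩
  rintro z ⟨hzA, hzs⟩
  exact ⟨not_lt.1 fun h => hzs (hcs ⟨hzA.1, h⟩), not_lt.1 fun h => hzs (hc's ⟨h, hzA.2⟩)⟩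

theorem tendsto_norm_nhds_sup_of_forall_isCompact {α : Type*} {l : Filter α} {g : α → ℂ}
    (hg : ∀ᶠ x in l, g x ∈ annulus r R)
    (hK : ∀ K ⊆ annulus r R, IsCompact K → ∀ᶠ x in l, g x ∉ K) :
    Tendsto (‖g ·‖) l (𝓝 r ⊔ 𝓝 R) := by
  intro W hW
  rw [mem_map]
  obtain ⟨hWr, hWR⟩ := mem_sup.1 hW
  have hKA : (‖·‖) ⁻¹' (Icc r R \ interior W) ⊆ annulus r R := fun z ⟨hz, hzW⟩ =>
    ⟨hz.1.lt_of_ne fun h => hzW (h ▸ mem_interior_iff_mem_nhds.2 hWr),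
      hz.2.lt_of_ne fun h => hzW (h ▸ mem_interior_iff_mem_nhds.2 hWR)⟩
  filter_upwards [hg, hK _ hKA (isCompact_norm_preimage (isCompact_Icc.diff isOpen_interior))]
    with x hx hxK
  by_contra hxW
  exact hxK ⟨⟨hx.1.le, hx.2.le⟩, fun h => hxW (interior_subset (s := W) h)⟩

end Annulus

section Holomorphic

variable {r R : ℝ} {f : ℂ → ℂ}

theorem tendsto_norm_edges_of_bijOn {r' R' : ℝ} (hr : 0 ≤ r) (hrR : r < R)
    (hf : DifferentiableOn ℂ f (annulus r R)) (hbij : BijOn f (annulus r R) (annulus r' R')) :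
    Tendsto (‖f ·‖) (innerEdge r ⊔ outerEdge R) (𝓝 r' ⊔ 𝓝 R') := by
  have hopen := hf.isOpenMap_domRestrict (isOpen_annulus r R) (isPreconnected_annulus r R)
    (annulus_nontrivial hr hrR) hbij.injOn
  refine tendsto_norm_nhds_sup_of_forall_isCompact
    (eventually_of_mem (annulus_mem_edges hrR) fun z hz => hbij.mapsTo hz) fun K hKA hK => ?_
  filter_upwards [annulus_mem_edges hrR,
    (hbij.isCompact_inter_preimage hopen hK hKA).compl_mem_edges inter_subset_left]
    with z hz hzK using fun hfz => hzK ⟨hz, hfz⟩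

theorem exists_eq_const_of_tendsto_norm_edges (hr : 0 ≤ r) (hrR : r < R)
    (hf : DifferentiableOn ℂ f (annulus r R)) (hf0 : ∀ z ∈ annulus r R, f z ≠ 0) {c : ℝ}
    (hc : c ≠ 0) (hlim : Tendsto (‖f ·‖) (innerEdge r ⊔ outerEdge R) (𝓝 c)) :
    ∃ l, ‖l‖ = c ∧ ∀ z ∈ annulus r R, f z = l := by
  have := innerEdge_neBot hr
  have hle : ∀ {g : ℂ → ℂ} {C : ℝ}, DifferentiableOn ℂ g (annulus r R) →
      Tendsto (‖g ·‖) (innerEdge r ⊔ outerEdge R) (𝓝 C) → ∀ z ∈ annulus r R, ‖g z‖ ≤ C :=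
    fun hg hC => hg.norm_le_of_tendsto_norm (isOpen_annulus r R) (isPreconnected_annulus r R)
      (annulus_mem_edges hrR) (fun _ => exists_isCompact_diff_subset_of_mem_edges) hC
  have hmax := hle hf hlim
  have hmin := hle (hf.inv hf0) (by simpa only [Pi.inv_apply, norm_inv] using hlim.inv₀ hc)
  have hnorm : ∀ z ∈ annulus r R, ‖f z‖ = c := fun z hz => by
    have hpos : 0 < ‖f z‖ := norm_pos_iff.2 (hf0 z hz)
    refine le_antisymm (hmax z hz) ((inv_le_inv₀ hpos (hpos.trans_le (hmax z hz))).1 ?_)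
    simpa only [Pi.inv_apply, norm_inv] using hmin z hz
  obtain ⟨w, hw⟩ := annulus_nonempty hr hrR
  exact ⟨f w, hnorm w hw, fun z hz => Complex.eqOn_of_isPreconnected_of_isMaxOn_norm
    (isPreconnected_annulus r R) (isOpen_annulus r R) hf hw
    (fun z hz => ((hnorm z hz).trans (hnorm w hw).symm).le) hz⟩

theorem not_tendsto_norm_edges_of_injOn (hr : 0 ≤ r) (hrR : r < R)
    (hf : DifferentiableOn ℂ f (annulus r R)) (hf0 : ∀ z ∈ annulus r R, f z ≠ 0)
    (hinj : InjOn f (annulus r R)) {c : ℝ} (hc : c ≠ 0) :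
    ¬Tendsto (‖f ·‖) (innerEdge r ⊔ outerEdge R) (𝓝 c) := fun hlim => by
  obtain ⟨l, -, hl⟩ := exists_eq_const_of_tendsto_norm_edges hr hrR hf hf0 hc hlim
  obtain ⟨x, hx, y, hy, hxy⟩ := annulus_nontrivial hr hrR
  exact hxy (hinj hx hy ((hl x hx).trans (hl y hy).symm))

theorem exists_eq_mul_of_tendsto_norm_edges (hr : 0 < r) (hrR : r < R)
    (hf : DifferentiableOn ℂ f (annulus r R)) (hf0 : ∀ z ∈ annulus r R, f z ≠ 0) {a b : ℝ}
    (ha : a ≠ 0) (hab : b / R = a / r) (hI : Tendsto (‖f ·‖) (innerEdge r) (𝓝 a))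
    (hO : Tendsto (‖f ·‖) (outerEdge R) (𝓝 b)) :
    ∃ l, (∀ z ∈ annulus r R, f z = l * z) ∧ ‖l‖ = a / r := by
  have hz : ∀ z ∈ annulus r R, z ≠ 0 := fun z hz => norm_pos_iff.1 (hr.trans hz.1)
  obtain ⟨l, hl, hfl⟩ := exists_eq_const_of_tendsto_norm_edges (f := fun z => f z / z) hr.le hrR
    (hf.div differentiableOn_id hz) (fun z hz' => div_ne_zero (hf0 z hz') (hz z hz'))
    (div_ne_zero ha hr.ne') (tendsto_sup.2
      ⟨by simpa only [Pi.div_def, norm_div] using hI.div (tendsto_norm_innerEdge r) hr.ne',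
      by simpa only [Pi.div_def, norm_div, hab]
        using hO.div (tendsto_norm_outerEdge R) (hr.trans hrR).ne'⟩)
  exact ⟨l, fun z hz' => by rw [← hfl z hz', div_mul_cancel₀ _ (hz z hz')], hl⟩

theorem exists_eq_div_of_tendsto_norm_edges (hr : 0 < r) (hrR : r < R)
    (hf : DifferentiableOn ℂ f (annulus r R)) (hf0 : ∀ z ∈ annulus r R, f z ≠ 0) {a b : ℝ}
    (hb : b ≠ 0) (hab : a * r = b * R) (hI : Tendsto (‖f ·‖) (innerEdge r) (𝓝 a))
    (hO : Tendsto (‖f ·‖) (outerEdge R) (𝓝 b)) :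
    ∃ l, (∀ z ∈ annulus r R, f z = l / z) ∧ ‖l‖ = b * R := by
  have hz : ∀ z ∈ annulus r R, z ≠ 0 := fun z hz => norm_pos_iff.1 (hr.trans hz.1)
  obtain ⟨l, hl, hfl⟩ := exists_eq_const_of_tendsto_norm_edges (f := fun z => f z * z) hr.le hrR
    (hf.mul differentiableOn_id) (fun z hz' => mul_ne_zero (hf0 z hz') (hz z hz'))
    (mul_ne_zero hb (hr.trans hrR).ne') (tendsto_sup.2
      ⟨by simpa only [norm_mul, hab] using hI.mul (tendsto_norm_innerEdge r),
      by simpa only [norm_mul] using hO.mul (tendsto_norm_outerEdge R)⟩)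
  exact ⟨l, fun z hz' => eq_div_of_mul_eq (hz z hz') (hfl z hz'), hl⟩

end Holomorphic

/-- **Schottky's theorem on conformal mappings between annuli (classification part).**
If `R₁/r₁ = R₂/r₂` and `f` is holomorphic on the annulus `A(r₁,R₁)` and maps it
bijectively onto the annulus `A(r₂,R₂)`, then `f` is of the form `z ↦ λ·z` with
`|λ| = r₂/r₁`, or of the form `z ↦ λ/z` with `|λ| = r₂·R₁`. -/
theorem conformal_map_annuli_classification
    (r₁ R₁ r₂ R₂ : ℝ) (hr₁ : 0 < r₁) (hR₁ : r₁ < R₁) (hr₂ : 0 < r₂) (hR₂ : r₂ < R₂)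
    (hratio : R₁ / r₁ = R₂ / r₂) (f : ℂ → ℂ)
    (hf : DifferentiableOn ℂ f (annulus r₁ R₁))
    (hbij : Set.BijOn f (annulus r₁ R₁) (annulus r₂ R₂)) :
    ∃ l : ℂ,
      ((∀ z ∈ annulus r₁ R₁, f z = l * z) ∧ ‖l‖ = r₂ / r₁) ∨
      ((∀ z ∈ annulus r₁ R₁, f z = l / z) ∧ ‖l‖ = r₂ * R₁) := by
  have hcross : R₂ * r₁ = r₂ * R₁ := by field_simp at hratio; linarith
  have hfz : ∀ z ∈ annulus r₁ R₁, f z ≠ 0 := fun z hz =>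
    norm_pos_iff.1 (hr₂.trans (hbij.mapsTo hz).1)
  have hcont : ContinuousOn (‖f ·‖) (annulus r₁ R₁) := hf.continuousOn.norm
  obtain ⟨hI, hO⟩ := tendsto_sup.1 (tendsto_norm_edges_of_bijOn hr₁.le hR₁ hf hbij)
  rcases (hasBasis_innerEdge r₁).tendsto_nhds_or_tendsto_nhds
    (fun _ _ => isPreconnected_annulus _ _) (annulus_mem_innerEdge hR₁) hcont hI with hI | hI <;>
  rcases (hasBasis_outerEdge R₁).tendsto_nhds_or_tendsto_nhds
    (fun _ _ => isPreconnected_annulus _ _) (annulus_mem_outerEdge hR₁) hcont hO with hO | hO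
  · exact absurd (tendsto_sup.2 ⟨hI, hO⟩) <|
      not_tendsto_norm_edges_of_injOn hr₁.le hR₁ hf hfz hbij.injOn hr₂.ne'
  · have hratio' : R₂ / R₁ = r₂ / r₁ := (div_eq_div_iff (hr₁.trans hR₁).ne' hr₁.ne').2 hcross
    exact (exists_eq_mul_of_tendsto_norm_edges hr₁ hR₁ hf hfz hr₂.ne' hratio' hI hO).imp
      fun _ => Or.inl
  · exact (exists_eq_div_of_tendsto_norm_edges hr₁ hR₁ hf hfz hr₂.ne' hcross hI hO).imp
      fun _ => Or.inr
  · exact absurd (tendsto_sup.2 ⟨hI, hO⟩) <|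
      not_tendsto_norm_edges_of_injOn hr₁.le hR₁ hf hfz hbij.injOn (hr₂.trans hR₂).ne'
end

section
/- Let C be a nonzero real number and let φ = diag(3C, C, −3C, −C) ∈ M₄(ℂ). Let j be an integer and let ψ₁, ψ₂ ∈ M₄(ℂ) satisfy ψᵢᵀ·J + J·ψᵢ = 0 for i = 1, 2 (i.e. ψ₁, ψ₂ ∈ sp(4,ℂ)). Suppose that −(j/2)·ψ₁ + (φψ₂ − ψ₂φ) = 0 and (j/2)·ψ₂ + (φψ₁ − ψ₁φ) = 0. Then there exist complex numbers a₁, d₁, a₂, d₂ such that ψᵢ = diag(aᵢ, dᵢ, −aᵢ, −dᵢ) for i = 1, 2; and if moreover j ≠ 0, then ψ₁ = ψ₂ = 0. -/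
open Matrix

/-- The standard symplectic form matrix `J = (0, I₂; −I₂, 0)` on `ℂ⁴`. -/
def Jmat : Matrix (Fin 4) (Fin 4) ℂ :=
  !![0, 0, 1, 0;
     0, 0, 0, 1;
     -1, 0, 0, 0;
     0, -1, 0, 0]

/-- The residue `φ = diag(3C, C, −3C, −C)` of the model Sp(4,ℝ)-Higgs field. -/
noncomputable def phiRes (C : ℝ) : Matrix (Fin 4) (Fin 4) ℂ :=
  Matrix.diagonal ![3 * (C : ℂ), (C : ℂ), -3 * (C : ℂ), -(C : ℂ)]

/-!
Entrywise, bracketing with the diagonal matrix `φ` multiplies the `(k, l)` entry by the real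
number `r = φₖ - φₗ`, so each pair of entries `(x, y) = (ψ₁ₖₗ, ψ₂ₖₗ)` solves the `2 × 2` system
`-s x + r y = 0`, `s y + r x = 0` with `s = j / 2`. Its determinant is `-(s² + r²)`, which is
nonzero unless `j = 0` and `φₖ = φₗ`. The eigenvalues `3C, C, -3C, -C` are distinct for `C ≠ 0`,
so `ψ₁, ψ₂` are diagonal (and zero when `j ≠ 0`), and the `sp(4, ℂ)` condition pairs the diagonal
entries as `diag(a, d, -a, -d)`.
-/

theorem Matrix.diagonal_mul_sub_mul_diagonal_apply {n R : Type*} [Fintype n] [DecidableEq n]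
    [CommRing R] (d : n → R) (A : Matrix n n R) (k l : n) :
    (diagonal d * A - A * diagonal d) k l = (d k - d l) * A k l := by
  rw [sub_apply, diagonal_mul, mul_diagonal]
  ring

theorem eq_zero_of_mul_self_add_mul_self_ne_zero {K : Type*} [Field K] {s r x y : K} (hsr : s * s + r * r ≠ 0)
    (h₁ : -s * x + r * y = 0) (h₂ : s * y + r * x = 0) : x = 0 ∧ y = 0 := by
  have hx : (s * s + r * r) * x = 0 := by linear_combination r * h₂ - s * h₁
  have hy : (s * s + r * r) * y = 0 := by linear_combination s * h₂ + r * h₁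
  exact ⟨(mul_eq_zero.1 hx).resolve_left hsr, (mul_eq_zero.1 hy).resolve_left hsr⟩

theorem apply_eq_zero_of_twisted_commutator_eq_zero {n : Type*} [Fintype n] [DecidableEq n]
    (d : n → ℝ) (s : ℝ) {A B : Matrix n n ℂ}
    (h₁ : -(s : ℂ) • A + (diagonal (fun k ↦ (d k : ℂ)) * B - B * diagonal (fun k ↦ (d k : ℂ))) = 0)
    (h₂ : (s : ℂ) • B + (diagonal (fun k ↦ (d k : ℂ)) * A - A * diagonal (fun k ↦ (d k : ℂ))) = 0)
    (k l : n) (hkl : s ≠ 0 ∨ d k ≠ d l) : A k l = 0 ∧ B k l = 0 := by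
  have e₁ := congrFun (congrFun h₁ k) l
  have e₂ := congrFun (congrFun h₂ k) l
  simp only [Matrix.add_apply, Matrix.smul_apply, smul_eq_mul,
    diagonal_mul_sub_mul_diagonal_apply, Matrix.zero_apply] at e₁ e₂
  have hsr : s * s + (d k - d l) * (d k - d l) ≠ 0 := by
    rw [Ne, mul_self_add_mul_self_eq_zero, sub_eq_zero]
    tauto
  exact eq_zero_of_mul_self_add_mul_self_ne_zero (by exact_mod_cast hsr) e₁ e₂

def phiWeight (C : ℝ) : Fin 4 → ℝ := ![3 * C, C, -3 * C, -C]

theorem phiRes_eq_diagonal (C : ℝ) : phiRes C = diagonal (fun k ↦ (phiWeight C k : ℂ)) := by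
  rw [phiRes]
  congr 1
  ext k
  fin_cases k <;> simp [phiWeight]

theorem phiWeight_injective {C : ℝ} (hC : C ≠ 0) : Function.Injective (phiWeight C) := by
  intro k l h
  by_contra hkl
  apply hC
  fin_cases k <;> fin_cases l <;> simp [phiWeight] at h hkl ⊢ <;> linarith

theorem diag_symplectic_relations {ψ : Matrix (Fin 4) (Fin 4) ℂ} (h : ψᵀ * Jmat + Jmat * ψ = 0) :
    ψ 2 2 = -ψ 0 0 ∧ ψ 3 3 = -ψ 1 1 := by
  have h₀₂ := congrFun (congrFun h 0) 2
  have h₁₃ := congrFun (congrFun h 1) 3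
  simp [Jmat, mul_apply, Fin.sum_univ_four, vecMul, dotProduct] at h₀₂ h₁₃
  exact ⟨by linear_combination h₀₂, by linear_combination h₁₃⟩

theorem eq_diagonal_of_isDiag_of_symplectic {ψ : Matrix (Fin 4) (Fin 4) ℂ} (hdiag : ψ.IsDiag)
    (h : ψᵀ * Jmat + Jmat * ψ = 0) :
    ψ = diagonal ![ψ 0 0, ψ 1 1, -ψ 0 0, -ψ 1 1] := by
  obtain ⟨h₂₂, h₃₃⟩ := diag_symplectic_relations h
  conv_lhs => rw [← hdiag.diagonal_diag]
  congr 1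
  ext k
  fin_cases k <;> simp [h₂₂, h₃₃]

/-- The Fourier-mode reduction (Proposition 6.1 of the paper) of the kernel equation
`D(ψ₁,ψ₂) = 0` for the residue `φ = diag(3C, C, −3C, −C)` of the model Higgs field:
solutions in `sp(4,ℂ)` are diagonal of the form `diag(a, d, −a, −d)`, and vanish for
nonzero Fourier modes `j ≠ 0`. -/
theorem fourier_mode_kernel_diagonal
    (C : ℝ) (hC : C ≠ 0) (j : ℤ) (ψ₁ ψ₂ : Matrix (Fin 4) (Fin 4) ℂ)
    (h₁ : ψ₁ᵀ * Jmat + Jmat * ψ₁ = 0) (h₂ : ψ₂ᵀ * Jmat + Jmat * ψ₂ = 0)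
    (heq₁ : (-((j : ℂ) / 2)) • ψ₁ + (phiRes C * ψ₂ - ψ₂ * phiRes C) = 0)
    (heq₂ : ((j : ℂ) / 2) • ψ₂ + (phiRes C * ψ₁ - ψ₁ * phiRes C) = 0) :
    (∃ a₁ d₁ a₂ d₂ : ℂ,
      ψ₁ = Matrix.diagonal ![a₁, d₁, -a₁, -d₁] ∧
      ψ₂ = Matrix.diagonal ![a₂, d₂, -a₂, -d₂]) ∧
    (j ≠ 0 → ψ₁ = 0 ∧ ψ₂ = 0) := by
  have hs : (((j : ℝ) / 2 : ℝ) : ℂ) = (j : ℂ) / 2 := by push_cast; ring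
  rw [phiRes_eq_diagonal, ← hs] at heq₁ heq₂
  have vanish := apply_eq_zero_of_twisted_commutator_eq_zero _ _ heq₁ heq₂
  have off_diag : ∀ k l, k ≠ l → ψ₁ k l = 0 ∧ ψ₂ k l = 0 := fun k l hkl ↦
    vanish k l (Or.inr ((phiWeight_injective hC).ne hkl))
  refine ⟨⟨_, _, _, _,
    eq_diagonal_of_isDiag_of_symplectic (fun k l hkl ↦ (off_diag k l hkl).1) h₁,
    eq_diagonal_of_isDiag_of_symplectic (fun k l hkl ↦ (off_diag k l hkl).2) h₂⟩, fun hj ↦ ?_⟩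
  have hs_ne : (j : ℝ) / 2 ≠ 0 := by positivity
  exact ⟨ext fun k l ↦ (vanish k l (Or.inl hs_ne)).1, ext fun k l ↦ (vanish k l (Or.inl hs_ne)).2⟩
end
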